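/- Assume the structure constants are nonnegative and irreducible. Then the map z* ↦ (1/ϖ(z*)) · z* is a bijection from the set of fixed points z* of W that are nonnegative and normalizable (all coordinates of z* are ≥ 0 and ϖ(z*) > 0) onto the set of fixed points of V, i.e. the set of z ∈ S^{n,ν} with ϖ(W(z)) ≠ 0 and V(z) = z. -/

import Mathlib

open Filter

/-- The gonosomic evolution operator `W` on `ℝ^n × ℝ^ν` associated with structure constants
`γ_{ipk}` and `γ̃_{ipr}`: it maps `((x_i), (y_p))` to `((x'_k), (y'_r))` with
`x'_k = Σ_{i,p} γ_{ipk} x_i y_p` and `y'_r = Σ_{i,p} γ̃_{ipr} x_i y_p`. -/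
noncomputable def W {n ν : ℕ} (γ : Fin n → Fin ν → Fin n → ℝ)
    (γ' : Fin n → Fin ν → Fin ν → ℝ)
    (z : (Fin n → ℝ) × (Fin ν → ℝ)) : (Fin n → ℝ) × (Fin ν → ℝ) :=
  (fun k => ∑ i, ∑ p, γ i p k * z.1 i * z.2 p,
   fun r => ∑ i, ∑ p, γ' i p r * z.1 i * z.2 p)

/-- The linear form `ϖ(z) = Σ_i x_i + Σ_p y_p` on `ℝ^n × ℝ^ν`. -/
noncomputable def piW {n ν : ℕ} (z : (Fin n → ℝ) × (Fin ν → ℝ)) : ℝ :=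
  ∑ i, z.1 i + ∑ p, z.2 p

/-- `γ_{ip} = Σ_k γ_{ipk}`. -/
noncomputable def gA {n ν : ℕ} (γ : Fin n → Fin ν → Fin n → ℝ)
    (i : Fin n) (p : Fin ν) : ℝ := ∑ k, γ i p k

/-- `γ̃_{ip} = Σ_r γ̃_{ipr}`. -/
noncomputable def gB {n ν : ℕ} (γ' : Fin n → Fin ν → Fin ν → ℝ)
    (i : Fin n) (p : Fin ν) : ℝ := ∑ r, γ' i p r

/-- `σ_{ip} = γ_{ip} + γ̃_{ip}`. -/
noncomputable def σc {n ν : ℕ} (γ : Fin n → Fin ν → Fin n → ℝ)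
    (γ' : Fin n → Fin ν → Fin ν → ℝ) (i : Fin n) (p : Fin ν) : ℝ :=
  gA γ i p + gB γ' i p

/-- The set `O^{n,ν}` of nonnegative points `((x_i),(y_p))` with `x_i y_p = 0` for every
pair `(i,p)` with `σ_{ip} ≠ 0`. -/
def Oset {n ν : ℕ} (γ : Fin n → Fin ν → Fin n → ℝ)
    (γ' : Fin n → Fin ν → Fin ν → ℝ) : Set ((Fin n → ℝ) × (Fin ν → ℝ)) :=
  {z | (∀ i, 0 ≤ z.1 i) ∧ (∀ p, 0 ≤ z.2 p) ∧
    ∀ i p, σc γ γ' i p ≠ 0 → z.1 i * z.2 p = 0}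

/-- The set `S^{n,ν} = S^{n+ν-1} \ O^{n,ν}`, where `S^{n+ν-1}` is the simplex of nonnegative
points with `ϖ(z) = 1`. -/
def Sset {n ν : ℕ} (γ : Fin n → Fin ν → Fin n → ℝ)
    (γ' : Fin n → Fin ν → Fin ν → ℝ) : Set ((Fin n → ℝ) × (Fin ν → ℝ)) :=
  {z | (∀ i, 0 ≤ z.1 i) ∧ (∀ p, 0 ≤ z.2 p) ∧ piW z = 1} \ Oset γ γ'

/-- The normalized gonosomic operator `V(z) = (1/ϖ(W z)) • W z` (junk value when
`ϖ(W z) = 0`, since in `ℝ` we have `0⁻¹ = 0`). -/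
noncomputable def V {n ν : ℕ} (γ : Fin n → Fin ν → Fin n → ℝ)
    (γ' : Fin n → Fin ν → Fin ν → ℝ)
    (z : (Fin n → ℝ) × (Fin ν → ℝ)) : (Fin n → ℝ) × (Fin ν → ℝ) :=
  (piW (W γ γ' z))⁻¹ • W γ γ' z


/-!
`W` is homogeneous of degree two and `ϖ` is linear. Hence a fixed point `z*` of `W` with
`ϖ z* > 0` rescales to a point `z = z* / ϖ z*` of the simplex with `W z = (1 / ϖ z*) • z`,
i.e. a fixed point of `V`; conversely a fixed point `z` of `V` satisfies `W z = μ • z` with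
`μ = ϖ (W z)`, and `z / μ` is a fixed point of `W`. Nonnegativity of the structure constants
makes `μ > 0`, so `z / μ` is nonnegative, and `z ↦ z / ϖ (W z)` inverts the normalization.
-/

open Finset

variable {n ν : ℕ} {γ : Fin n → Fin ν → Fin n → ℝ} {γ' : Fin n → Fin ν → Fin ν → ℝ}

lemma piW_smul (c : ℝ) (z : (Fin n → ℝ) × (Fin ν → ℝ)) : piW (c • z) = c * piW z := by
  simp [piW, mul_sum, mul_add]

lemma W_smul (c : ℝ) (z : (Fin n → ℝ) × (Fin ν → ℝ)) :
    W γ γ' (c • z) = c ^ 2 • W γ γ' z := by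
  refine Prod.ext (funext fun k => ?_) (funext fun r => ?_) <;>
    simp only [W, Prod.smul_fst, Prod.smul_snd, Pi.smul_apply, smul_eq_mul, mul_sum] <;>
    exact sum_congr rfl fun i _ => sum_congr rfl fun p _ => by ring

lemma piW_W (z : (Fin n → ℝ) × (Fin ν → ℝ)) :
    piW (W γ γ' z) = ∑ i, ∑ p, σc γ γ' i p * z.1 i * z.2 p := by
  simp only [piW, W, σc, gA, gB, add_mul, sum_mul, sum_add_distrib]
  congr 1 <;> rw [sum_comm] <;> exact sum_congr rfl fun i _ => sum_comm

lemma piW_W_nonneg (hγ : ∀ i p k, 0 ≤ γ i p k) (hγ' : ∀ i p r, 0 ≤ γ' i p r)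
    {z : (Fin n → ℝ) × (Fin ν → ℝ)} (hx : ∀ i, 0 ≤ z.1 i) (hy : ∀ p, 0 ≤ z.2 p) :
    0 ≤ piW (W γ γ' z) := by
  have hσ (i : Fin n) (p : Fin ν) : 0 ≤ σc γ γ' i p :=
    add_nonneg (sum_nonneg fun k _ => hγ i p k) (sum_nonneg fun r _ => hγ' i p r)
  rw [piW_W]
  exact sum_nonneg fun i _ => sum_nonneg fun p _ =>
    mul_nonneg (mul_nonneg (hσ i p) (hx i)) (hy p)

lemma piW_W_eq_zero_of_mem_Oset {z : (Fin n → ℝ) × (Fin ν → ℝ)} (hz : z ∈ Oset γ γ') :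
    piW (W γ γ' z) = 0 := by
  rw [piW_W]
  refine sum_eq_zero fun i _ => sum_eq_zero fun p _ => ?_
  by_cases hσ : σc γ γ' i p = 0
  · simp [hσ]
  · rw [mul_assoc, hz.2.2 i p hσ, mul_zero]

lemma W_inv_smul_of_W_eq_smul {μ : ℝ} {z : (Fin n → ℝ) × (Fin ν → ℝ)} (hμ : μ ≠ 0)
    (hz : W γ γ' z = μ • z) : W γ γ' (μ⁻¹ • z) = μ⁻¹ • z := by
  rw [W_smul, hz, smul_smul]
  congr 1
  field_simp

lemma piW_W_normalize_of_W_eq {z : (Fin n → ℝ) × (Fin ν → ℝ)} (hz : W γ γ' z = z)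
    (hpos : piW z ≠ 0) : piW (W γ γ' ((piW z)⁻¹ • z)) = (piW z)⁻¹ := by
  rw [W_smul, hz, piW_smul]
  field_simp

lemma W_eq_smul_of_V_eq {z : (Fin n → ℝ) × (Fin ν → ℝ)} (hμ : piW (W γ γ' z) ≠ 0)
    (hV : V γ γ' z = z) : W γ γ' z = piW (W γ γ' z) • z :=
  (inv_smul_eq_iff₀ hμ).1 hV

lemma inv_piW_smul_mem_of_W_eq {z : (Fin n → ℝ) × (Fin ν → ℝ)} (hx : ∀ i, 0 ≤ z.1 i)
    (hy : ∀ p, 0 ≤ z.2 p) (hpos : 0 < piW z) (hz : W γ γ' z = z) :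
    (piW z)⁻¹ • z ∈ Sset γ γ' ∧ piW (W γ γ' ((piW z)⁻¹ • z)) ≠ 0 ∧
      V γ γ' ((piW z)⁻¹ • z) = (piW z)⁻¹ • z := by
  have hc : 0 < (piW z)⁻¹ := inv_pos.2 hpos
  have hμ := piW_W_normalize_of_W_eq hz hpos.ne'
  refine ⟨⟨⟨fun i => mul_nonneg hc.le (hx i), fun p => mul_nonneg hc.le (hy p), ?_⟩,
    fun hO => hc.ne' (hμ ▸ piW_W_eq_zero_of_mem_Oset hO)⟩, hμ.symm ▸ hc.ne', ?_⟩
  · rw [piW_smul, inv_mul_cancel₀ hpos.ne']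
  · rw [V, hμ, W_smul, hz, smul_smul]
    congr 1
    field_simp

lemma inv_piW_W_smul_mem_of_V_eq (hγ : ∀ i p k, 0 ≤ γ i p k) (hγ' : ∀ i p r, 0 ≤ γ' i p r)
    {z : (Fin n → ℝ) × (Fin ν → ℝ)} (hz : z ∈ Sset γ γ') (hμ : piW (W γ γ' z) ≠ 0)
    (hV : V γ γ' z = z) :
    (∀ i, 0 ≤ ((piW (W γ γ' z))⁻¹ • z).1 i) ∧ (∀ p, 0 ≤ ((piW (W γ γ' z))⁻¹ • z).2 p) ∧
      0 < piW ((piW (W γ γ' z))⁻¹ • z) ∧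
      W γ γ' ((piW (W γ γ' z))⁻¹ • z) = (piW (W γ γ' z))⁻¹ • z := by
  obtain ⟨⟨hx, hy, hpi⟩, -⟩ := hz
  have hc : 0 < (piW (W γ γ' z))⁻¹ :=
    inv_pos.2 ((piW_W_nonneg hγ hγ' hx hy).lt_of_ne' hμ)
  refine ⟨fun i => mul_nonneg hc.le (hx i), fun p => mul_nonneg hc.le (hy p), ?_,
    W_inv_smul_of_W_eq_smul hμ (W_eq_smul_of_V_eq hμ hV)⟩
  rwa [piW_smul, hpi, mul_one]

theorem stmt_18_general {n ν : ℕ}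
    (γ : Fin n → Fin ν → Fin n → ℝ) (γ' : Fin n → Fin ν → Fin ν → ℝ)
    (hγ : ∀ i p k, 0 ≤ γ i p k) (hγ' : ∀ i p r, 0 ≤ γ' i p r) :
    Set.BijOn (fun z : (Fin n → ℝ) × (Fin ν → ℝ) => (piW z)⁻¹ • z)
      {z | (∀ i, 0 ≤ z.1 i) ∧ (∀ p, 0 ≤ z.2 p) ∧ 0 < piW z ∧ W γ γ' z = z}
      {z | z ∈ Sset γ γ' ∧ piW (W γ γ' z) ≠ 0 ∧ V γ γ' z = z} := by
  refine Set.InvOn.bijOn (f' := fun z => (piW (W γ γ' z))⁻¹ • z) ⟨?_, ?_⟩ ?_ ?_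
  · rintro z ⟨-, -, hpos, hz⟩
    simp only [piW_W_normalize_of_W_eq hz hpos.ne', inv_inv, smul_smul,
      mul_inv_cancel₀ hpos.ne', one_smul]
  · rintro z ⟨⟨⟨-, -, hpi⟩, -⟩, hμ, -⟩
    simp only [piW_smul, hpi, mul_one, inv_inv, smul_smul, mul_inv_cancel₀ hμ, one_smul]
  · rintro z ⟨hx, hy, hpos, hz⟩
    exact inv_piW_smul_mem_of_W_eq hx hy hpos hz
  · rintro z ⟨hz, hμ, hV⟩
    exact inv_piW_W_smul_mem_of_V_eq hγ hγ' hz hμ hV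

/-- Suppose the structure constants are nonnegative and irreducible.  Then
`z* ↦ (1/ϖ(z*)) • z*` is a bijection from the set of nonnegative normalizable fixed points of
`W` (all coordinates `≥ 0`, `ϖ(z*) > 0`, `W z* = z*`) onto the set of fixed points of `V`,
i.e. the set of `z ∈ S^{n,ν}` with `ϖ(W z) ≠ 0` and `V z = z`. -/
theorem stmt_18 {n ν : ℕ} (hn : 1 ≤ n) (hν : 1 ≤ ν)
    (γ : Fin n → Fin ν → Fin n → ℝ) (γ' : Fin n → Fin ν → Fin ν → ℝ)
    (hγ : ∀ i p k, 0 ≤ γ i p k) (hγ' : ∀ i p r, 0 ≤ γ' i p r)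
    (hirr₁ : ∀ k : Fin n, ∃ (i : Fin n) (p : Fin ν), γ i p k ≠ 0)
    (hirr₂ : ∀ r : Fin ν, ∃ (i : Fin n) (p : Fin ν), γ' i p r ≠ 0) :
    Set.BijOn (fun z : (Fin n → ℝ) × (Fin ν → ℝ) => (piW z)⁻¹ • z)
      {z | (∀ i, 0 ≤ z.1 i) ∧ (∀ p, 0 ≤ z.2 p) ∧ 0 < piW z ∧ W γ γ' z = z}
      {z | z ∈ Sset γ γ' ∧ piW (W γ γ' z) ≠ 0 ∧ V γ γ' z = z} :=
  stmt_18_general γ γ' hγ hγ'
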